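/- arXiv:1012.2856 — 2 statements merged into one kernel-verified Lean document; each statement's English description precedes it below -/
import Mathlib

section
/- (Theta functional interpolation identity.) Let M ≥ 1, let τ ∈ ℂ with Im τ > 0, and let z_1,…,z_M, z'_1,…,z'_M ∈ ℂ satisfy the balancing condition ∑_{i=1}^M z_i = ∑_{i=1}^M z'_i and θ1(z_i − z_j;τ) ≠ 0 for all i ≠ j. Then ∑_{i=1}^M [∏_{j=1}^M θ1(z_i − z'_j;τ)] / [∏_{j≠i} θ1(z_i − z_j;τ)] = 0. -/
open Finset

noncomputable section

/-- The Jacobi theta function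
`θ1(z;τ) = −i ∑_{n∈ℤ} (−1)^n exp(iπτ(n+1/2)²)·e^{(2n+1)iz}`. -/
def jacobiTheta1 (z τ : ℂ) : ℂ :=
  -Complex.I * ∑' n : ℤ,
    (-1 : ℂ) ^ n *
      Complex.exp ((Real.pi : ℂ) * Complex.I * τ * ((n : ℂ) + 2⁻¹) ^ 2) *
      Complex.exp ((2 * (n : ℂ) + 1) * Complex.I * z)

namespace ThetaAux

open Complex Filter

lemma summable_norm_jacobiTheta₂_term {τ : ℂ} (hτ : 0 < τ.im) (z : ℂ) :
    Summable fun n : ℤ => ‖jacobiTheta₂_term n z τ‖ := by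
  apply Summable.of_nonneg_of_le (fun n => norm_nonneg _)
    (fun n => norm_jacobiTheta₂_term_le hτ (le_refl |z.im|) (le_refl τ.im) n)
  simpa only [pow_zero, one_mul] using
    summable_pow_mul_jacobiTheta₂_term_bound |z.im| hτ 0

def T (τ : ℂ) (n : ℤ) (z : ℂ) : ℂ :=
  Complex.exp ((n : ℂ) * (↑Real.pi * I) + (↑Real.pi : ℂ) * I * τ * ((n : ℂ) + 2⁻¹) ^ 2 +
    (2 * (n : ℂ) + 1) * I * z)

lemma term_eq_T (τ : ℂ) (n : ℤ) (z : ℂ) :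
    (-1 : ℂ) ^ n * Complex.exp ((Real.pi : ℂ) * Complex.I * τ * ((n : ℂ) + 2⁻¹) ^ 2) *
      Complex.exp ((2 * (n : ℂ) + 1) * Complex.I * z) = T τ n z := by
  rw [T, Complex.exp_add, Complex.exp_add, Complex.exp_int_mul, Complex.exp_pi_mul_I]

lemma jacobiTheta1_tsum (z τ : ℂ) : jacobiTheta1 z τ = -I * ∑' n : ℤ, T τ n z := by
  rw [jacobiTheta1]
  congr 1
  exact tsum_congr fun n => term_eq_T τ n z

lemma T_eq_term (τ : ℂ) (n : ℤ) (z : ℂ) :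
    T τ n z = Complex.exp ((Real.pi : ℂ) * I * τ / 4 + I * z) *
      jacobiTheta₂_term n ((τ + 1) / 2 + z / Real.pi) τ := by
  rw [T, jacobiTheta₂_term, ← Complex.exp_add]
  congr 1
  have hπ : (Real.pi : ℂ) ≠ 0 := by exact_mod_cast Real.pi_ne_zero
  field_simp
  ring

lemma summable_norm_T {τ : ℂ} (hτ : 0 < τ.im) (z : ℂ) :
    Summable fun n : ℤ => ‖T τ n z‖ := by
  simp only [T_eq_term, norm_mul]
  exact (summable_norm_jacobiTheta₂_term hτ _).mul_left _

lemma summable_T {τ : ℂ} (hτ : 0 < τ.im) (z : ℂ) :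
    Summable fun n : ℤ => T τ n z := (summable_norm_T hτ z).of_norm

/-- Bridge to `jacobiTheta₂`. -/
lemma jacobiTheta1_eq (z τ : ℂ) :
    jacobiTheta1 z τ = -I * Complex.exp ((Real.pi : ℂ) * I * τ / 4 + I * z) *
      jacobiTheta₂ ((τ + 1) / 2 + z / Real.pi) τ := by
  rw [jacobiTheta1_tsum, jacobiTheta₂, mul_assoc]
  congr 1
  rw [← tsum_mul_left]
  exact tsum_congr fun n => T_eq_term τ n z

lemma continuous_jacobiTheta1 {τ : ℂ} (hτ : 0 < τ.im) :
    Continuous fun z => jacobiTheta1 z τ := by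
  simp only [jacobiTheta1_eq]
  apply Continuous.mul
  · fun_prop
  · have : Continuous fun z : ℂ => jacobiTheta₂ z τ := by
      rw [continuous_iff_continuousAt]
      intro z
      exact (continuousAt_jacobiTheta₂ z hτ).comp (f := fun w : ℂ => (w, τ)) (by fun_prop)
    exact this.comp (by fun_prop)

lemma differentiable_jacobiTheta1 {τ : ℂ} (hτ : 0 < τ.im) :
    Differentiable ℂ fun z => jacobiTheta1 z τ := by
  simp only [jacobiTheta1_eq]
  apply Differentiable.mul
  · fun_prop
  · intro z
    exact (differentiableAt_jacobiTheta₂_fst _ hτ).comp z (by fun_prop)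

lemma analyticOnNhd_jacobiTheta1 {τ : ℂ} (hτ : 0 < τ.im) :
    AnalyticOnNhd ℂ (fun z => jacobiTheta1 z τ) Set.univ :=
  (differentiable_jacobiTheta1 hτ).differentiableOn.analyticOnNhd isOpen_univ

lemma jacobiTheta1_neg (z τ : ℂ) : jacobiTheta1 (-z) τ = -jacobiTheta1 z τ := by
  rw [jacobiTheta1_tsum, jacobiTheta1_tsum]
  let e : ℤ ≃ ℤ := ⟨fun n => -1 - n, fun n => -1 - n, fun n => by show -1 - (-1 - n) = n; omega,
    fun n => by show -1 - (-1 - n) = n; omega⟩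
  have h1 : ∑' n : ℤ, T τ n (-z) = ∑' n : ℤ, T τ (e n) (-z) := (e.tsum_eq fun n => T τ n (-z)).symm
  have h2 : ∀ n : ℤ, T τ (e n) (-z) = -T τ n z := by
    intro n
    show T τ (-1 - n) (-z) = -T τ n z
    rw [T, T]
    have hodd : Complex.exp ((-(2 * (n:ℂ) + 1)) * (↑Real.pi * I)) = -1 := by
      have h0 : (-(2 * (n : ℂ) + 1)) = ((-(2 * n + 1) : ℤ) : ℂ) := by push_cast; ring
      rw [h0, Complex.exp_int_mul, Complex.exp_pi_mul_I]
      exact Odd.neg_one_zpow ⟨-(n+1), by ring⟩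
    have hE : ((-1 - n : ℤ) : ℂ) * (↑Real.pi * I) +
        (↑Real.pi : ℂ) * I * τ * (((-1 - n : ℤ) : ℂ) + 2⁻¹) ^ 2 +
        (2 * ((-1 - n : ℤ) : ℂ) + 1) * I * (-z) =
        ((n : ℂ) * (↑Real.pi * I) + (↑Real.pi : ℂ) * I * τ * ((n : ℂ) + 2⁻¹) ^ 2 +
        (2 * (n : ℂ) + 1) * I * z) + (-(2 * (n:ℂ) + 1)) * (↑Real.pi * I) := by
      push_cast; ring
    rw [hE, Complex.exp_add, hodd]
    ring
  rw [h1, tsum_congr h2, tsum_neg]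
  ring

lemma jacobiTheta1_zero (τ : ℂ) : jacobiTheta1 0 τ = 0 := by
  have := jacobiTheta1_neg 0 τ
  rw [neg_zero] at this
  linear_combination this / 2


/-! ### The quadratic product identity -/

def Aterm (τ : ℂ) (p : ℤ) (x : ℂ) : ℂ :=
  Complex.exp (2 * (Real.pi : ℂ) * I * τ * (p : ℂ) ^ 2 + 4 * (p : ℂ) * I * x)

def Bterm (τ : ℂ) (p : ℤ) (x : ℂ) : ℂ :=
  Complex.exp ((Real.pi : ℂ) * I * τ * (2 * (p : ℂ) + 1) ^ 2 / 2 + (4 * (p : ℂ) + 2) * I * x)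

def AA (τ x : ℂ) : ℂ := ∑' p : ℤ, Aterm τ p x

def BB (τ x : ℂ) : ℂ := ∑' p : ℤ, Bterm τ p x

lemma Aterm_eq (τ : ℂ) (p : ℤ) (x : ℂ) :
    Aterm τ p x = jacobiTheta₂_term p (2 * x / Real.pi) (2 * τ) := by
  rw [Aterm, jacobiTheta₂_term]
  congr 1
  have hπ : (Real.pi : ℂ) ≠ 0 := by exact_mod_cast Real.pi_ne_zero
  field_simp
  ring

lemma Bterm_eq (τ : ℂ) (p : ℤ) (x : ℂ) :
    Bterm τ p x = Complex.exp ((Real.pi : ℂ) * I * τ / 2 + 2 * I * x) *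
      jacobiTheta₂_term p (2 * x / Real.pi + τ) (2 * τ) := by
  rw [Bterm, jacobiTheta₂_term, ← Complex.exp_add]
  congr 1
  have hπ : (Real.pi : ℂ) ≠ 0 := by exact_mod_cast Real.pi_ne_zero
  field_simp
  ring

lemma im_two_tau {τ : ℂ} (hτ : 0 < τ.im) : 0 < (2 * τ).im := by
  have h : (2 * τ).im = 2 * τ.im := by simp [Complex.mul_im]
  rw [h]; linarith

lemma summable_norm_Aterm {τ : ℂ} (hτ : 0 < τ.im) (x : ℂ) :
    Summable fun p : ℤ => ‖Aterm τ p x‖ := by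
  simp only [Aterm_eq]
  exact summable_norm_jacobiTheta₂_term (im_two_tau hτ) _

lemma summable_norm_Bterm {τ : ℂ} (hτ : 0 < τ.im) (x : ℂ) :
    Summable fun p : ℤ => ‖Bterm τ p x‖ := by
  simp only [Bterm_eq, norm_mul]
  exact (summable_norm_jacobiTheta₂_term (im_two_tau hτ) _).mul_left _

set_option maxHeartbeats 1000000 in
/-- The key quadratic identity `θ1(x+y)θ1(x-y) = A(x)B(y) - B(x)A(y)`. -/
lemma key {τ : ℂ} (hτ : 0 < τ.im) (x y : ℂ) :
    jacobiTheta1 (x + y) τ * jacobiTheta1 (x - y) τ =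
      AA τ x * BB τ y - BB τ x * AA τ y := by
  classical
  have hFsum : HasSum (fun mn : ℤ × ℤ => T τ mn.1 (x + y) * T τ mn.2 (x - y))
      ((∑' m : ℤ, T τ m (x + y)) * ∑' n : ℤ, T τ n (x - y)) :=
    HasSum.mul (f := fun n : ℤ => T τ n (x + y)) (g := fun n : ℤ => T τ n (x - y))
      (summable_T hτ _).hasSum (summable_T hτ _).hasSum
      (summable_mul_of_summable_norm (f := fun n : ℤ => T τ n (x + y))
        (g := fun n : ℤ => T τ n (x - y))
        (summable_norm_T hτ (x + y)) (summable_norm_T hτ (x - y)))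
  have hj₁ : Function.Injective (fun pr : ℤ × ℤ => ((pr.1 + pr.2, pr.1 - pr.2 - 1) : ℤ × ℤ)) := by
    intro a b h
    simp only [Prod.mk.injEq] at h
    exact Prod.ext (by omega) (by omega)
  have hj₂ : Function.Injective (fun pr : ℤ × ℤ => ((pr.1 + pr.2, pr.1 - pr.2) : ℤ × ℤ)) := by
    intro a b h
    simp only [Prod.mk.injEq] at h
    exact Prod.ext (by omega) (by omega)
  have hr₁ : ∀ mn : ℤ × ℤ,
      mn ∉ Set.range (fun pr : ℤ × ℤ => ((pr.1 + pr.2, pr.1 - pr.2 - 1) : ℤ × ℤ)) →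
      (if Even (mn.1 - mn.2) then 0 else T τ mn.1 (x + y) * T τ mn.2 (x - y)) = 0 := by
    rintro ⟨m1, m2⟩ hmn
    have hev : Even (m1 - m2) := by
      by_contra hodd
      apply hmn
      rw [Int.not_even_iff_odd] at hodd
      obtain ⟨k, hk⟩ := hodd
      exact ⟨(k + m2 + 1, k), by simp only [Prod.mk.injEq]; omega⟩
    rw [if_pos hev]
  have hr₂ : ∀ mn : ℤ × ℤ,
      mn ∉ Set.range (fun pr : ℤ × ℤ => ((pr.1 + pr.2, pr.1 - pr.2) : ℤ × ℤ)) →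
      (if Even (mn.1 - mn.2) then T τ mn.1 (x + y) * T τ mn.2 (x - y) else 0) = 0 := by
    rintro ⟨m1, m2⟩ hmn
    have hev : ¬ Even (m1 - m2) := by
      intro heven
      apply hmn
      obtain ⟨k, hk⟩ := heven
      exact ⟨(m2 + k, k), by simp only [Prod.mk.injEq]; omega⟩
    rw [if_neg hev]
  have hterm₁ : ∀ pr : ℤ × ℤ,
      (fun mn : ℤ × ℤ => if Even (mn.1 - mn.2) then 0 else T τ mn.1 (x + y) * T τ mn.2 (x - y))
        ((pr.1 + pr.2, pr.1 - pr.2 - 1)) = -(Aterm τ pr.1 x * Bterm τ pr.2 y) := by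
    rintro ⟨p, r⟩
    have hcond : ¬ Even ((p + r) - (p - r - 1)) := by
      rw [Int.not_even_iff_odd]
      exact ⟨r, by ring⟩
    simp only [hcond, if_false]
    rw [T, T, Aterm, Bterm, ← Complex.exp_add, ← Complex.exp_add]
    have hodd : Complex.exp (((2 * p - 1 : ℤ) : ℂ) * (↑Real.pi * I)) = -1 := by
      rw [Complex.exp_int_mul, Complex.exp_pi_mul_I]
      exact Odd.neg_one_zpow ⟨p - 1, by ring⟩
    have hE : ((p + r : ℤ) : ℂ) * (↑Real.pi * I) +
        (↑Real.pi : ℂ) * I * τ * (((p + r : ℤ) : ℂ) + 2⁻¹) ^ 2 +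
        (2 * ((p + r : ℤ) : ℂ) + 1) * I * (x + y) +
        (((p - r - 1 : ℤ) : ℂ) * (↑Real.pi * I) +
        (↑Real.pi : ℂ) * I * τ * (((p - r - 1 : ℤ) : ℂ) + 2⁻¹) ^ 2 +
        (2 * ((p - r - 1 : ℤ) : ℂ) + 1) * I * (x - y)) =
        (2 * (Real.pi : ℂ) * I * τ * (p : ℂ) ^ 2 + 4 * (p : ℂ) * I * x +
        ((Real.pi : ℂ) * I * τ * (2 * (r : ℂ) + 1) ^ 2 / 2 + (4 * (r : ℂ) + 2) * I * y)) +
        ((2 * p - 1 : ℤ) : ℂ) * (↑Real.pi * I) := by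
      push_cast
      ring
    rw [hE, Complex.exp_add, hodd]
    ring
  have hterm₂ : ∀ pr : ℤ × ℤ,
      (fun mn : ℤ × ℤ => if Even (mn.1 - mn.2) then T τ mn.1 (x + y) * T τ mn.2 (x - y) else 0)
        ((pr.1 + pr.2, pr.1 - pr.2)) = Bterm τ pr.1 x * Aterm τ pr.2 y := by
    rintro ⟨p, r⟩
    have hcond : Even ((p + r) - (p - r)) := ⟨r, by ring⟩
    simp only [hcond, if_true]
    rw [T, T, Aterm, Bterm, ← Complex.exp_add, ← Complex.exp_add]
    have heven : Complex.exp (((2 * p : ℤ) : ℂ) * (↑Real.pi * I)) = 1 := by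
      rw [Complex.exp_int_mul, Complex.exp_pi_mul_I]
      exact Even.neg_one_zpow ⟨p, by ring⟩
    have hE : ((p + r : ℤ) : ℂ) * (↑Real.pi * I) +
        (↑Real.pi : ℂ) * I * τ * (((p + r : ℤ) : ℂ) + 2⁻¹) ^ 2 +
        (2 * ((p + r : ℤ) : ℂ) + 1) * I * (x + y) +
        (((p - r : ℤ) : ℂ) * (↑Real.pi * I) +
        (↑Real.pi : ℂ) * I * τ * (((p - r : ℤ) : ℂ) + 2⁻¹) ^ 2 +
        (2 * ((p - r : ℤ) : ℂ) + 1) * I * (x - y)) =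
        ((Real.pi : ℂ) * I * τ * (2 * (p : ℂ) + 1) ^ 2 / 2 + (4 * (p : ℂ) + 2) * I * x +
        (2 * (Real.pi : ℂ) * I * τ * (r : ℂ) ^ 2 + 4 * (r : ℂ) * I * y)) +
        ((2 * p : ℤ) : ℂ) * (↑Real.pi * I) := by
      push_cast
      ring
    rw [hE, Complex.exp_add, heven]
    ring
  have hA1 : HasSum (fun pr : ℤ × ℤ => Aterm τ pr.1 x * Bterm τ pr.2 y) (AA τ x * BB τ y) :=
    HasSum.mul (f := fun p : ℤ => Aterm τ p x) (g := fun p : ℤ => Bterm τ p y)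
      (summable_norm_Aterm hτ x).of_norm.hasSum (summable_norm_Bterm hτ y).of_norm.hasSum
      (summable_mul_of_summable_norm (f := fun p : ℤ => Aterm τ p x)
        (g := fun p : ℤ => Bterm τ p y)
        (summable_norm_Aterm hτ x) (summable_norm_Bterm hτ y))
  have hA2 : HasSum (fun pr : ℤ × ℤ => Bterm τ pr.1 x * Aterm τ pr.2 y) (BB τ x * AA τ y) :=
    HasSum.mul (f := fun p : ℤ => Bterm τ p x) (g := fun p : ℤ => Aterm τ p y)
      (summable_norm_Bterm hτ x).of_norm.hasSum (summable_norm_Aterm hτ y).of_norm.hasSum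
      (summable_mul_of_summable_norm (f := fun p : ℤ => Bterm τ p x)
        (g := fun p : ℤ => Aterm τ p y)
        (summable_norm_Bterm hτ x) (summable_norm_Aterm hτ y))
  have hF₁sum : HasSum
      (fun mn : ℤ × ℤ => if Even (mn.1 - mn.2) then 0 else T τ mn.1 (x + y) * T τ mn.2 (x - y))
      (-(AA τ x * BB τ y)) := by
    rw [← Function.Injective.hasSum_iff hj₁ hr₁]
    have heq : ((fun mn : ℤ × ℤ =>
        if Even (mn.1 - mn.2) then 0 else T τ mn.1 (x + y) * T τ mn.2 (x - y)) ∘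
        (fun pr : ℤ × ℤ => ((pr.1 + pr.2, pr.1 - pr.2 - 1) : ℤ × ℤ))) =
        fun pr : ℤ × ℤ => -(Aterm τ pr.1 x * Bterm τ pr.2 y) :=
      funext fun pr => hterm₁ pr
    rw [heq]
    exact hA1.neg
  have hF₂sum : HasSum
      (fun mn : ℤ × ℤ => if Even (mn.1 - mn.2) then T τ mn.1 (x + y) * T τ mn.2 (x - y) else 0)
      (BB τ x * AA τ y) := by
    rw [← Function.Injective.hasSum_iff hj₂ hr₂]
    have heq : ((fun mn : ℤ × ℤ =>
        if Even (mn.1 - mn.2) then T τ mn.1 (x + y) * T τ mn.2 (x - y) else 0) ∘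
        (fun pr : ℤ × ℤ => ((pr.1 + pr.2, pr.1 - pr.2) : ℤ × ℤ))) =
        fun pr : ℤ × ℤ => Bterm τ pr.1 x * Aterm τ pr.2 y :=
      funext fun pr => hterm₂ pr
    rw [heq]
    exact hA2
  have hFsum' : HasSum (fun mn : ℤ × ℤ => T τ mn.1 (x + y) * T τ mn.2 (x - y))
      (-(AA τ x * BB τ y) + BB τ x * AA τ y) := by
    have hsplit : (fun mn : ℤ × ℤ => T τ mn.1 (x + y) * T τ mn.2 (x - y)) =
        fun mn : ℤ × ℤ =>
          (if Even (mn.1 - mn.2) then 0 else T τ mn.1 (x + y) * T τ mn.2 (x - y)) +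
          (if Even (mn.1 - mn.2) then T τ mn.1 (x + y) * T τ mn.2 (x - y) else 0) := by
      funext mn
      by_cases h : Even (mn.1 - mn.2) <;> simp [h]
    rw [hsplit]
    exact hF₁sum.add hF₂sum
  have hkey := hFsum.unique hFsum'
  rw [jacobiTheta1_tsum, jacobiTheta1_tsum]
  calc -I * (∑' n : ℤ, T τ n (x + y)) * (-I * ∑' n : ℤ, T τ n (x - y))
      = -((∑' n : ℤ, T τ n (x + y)) * ∑' n : ℤ, T τ n (x - y)) := by
        linear_combination ((∑' n : ℤ, T τ n (x + y)) * ∑' n : ℤ, T τ n (x - y)) * Complex.I_sq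
    _ = AA τ x * BB τ y - BB τ x * AA τ y := by rw [hkey]; ring

/-- The three-term (Plücker-type) identity specialised for the induction. -/
lemma star {τ : ℂ} (hτ : 0 < τ.im) (b₁ b₂ α β w : ℂ) :
    jacobiTheta1 (w - b₁) τ * jacobiTheta1 (w - b₂) τ *
      (jacobiTheta1 (b₁ + b₂ - α - β) τ * jacobiTheta1 (β - α) τ) =
    jacobiTheta1 (b₂ - β) τ * jacobiTheta1 (β - b₁) τ *
      (jacobiTheta1 (w - α) τ * jacobiTheta1 (w - (b₁ + b₂ - α)) τ) -
    jacobiTheta1 (b₂ - α) τ * jacobiTheta1 (α - b₁) τ *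
      (jacobiTheta1 (w - β) τ * jacobiTheta1 (w - (b₁ + b₂ - β)) τ) := by
  have e1 : w - b₁ = (w - (b₁ + b₂) / 2) + ((b₁ + b₂) / 2 - b₁) := by ring
  have e2 : w - b₂ = (w - (b₁ + b₂) / 2) - ((b₁ + b₂) / 2 - b₁) := by ring
  have e3 : b₁ + b₂ - α - β = ((b₁ + b₂) / 2 - α) + ((b₁ + b₂) / 2 - β) := by ring
  have e4 : β - α = ((b₁ + b₂) / 2 - α) - ((b₁ + b₂) / 2 - β) := by ring
  have e5 : w - α = (w - (b₁ + b₂) / 2) + ((b₁ + b₂) / 2 - α) := by ring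
  have e6 : w - (b₁ + b₂ - α) = (w - (b₁ + b₂) / 2) - ((b₁ + b₂) / 2 - α) := by ring
  have e7 : b₂ - β = ((b₁ + b₂) / 2 - b₁) + ((b₁ + b₂) / 2 - β) := by ring
  have e8 : β - b₁ = ((b₁ + b₂) / 2 - b₁) - ((b₁ + b₂) / 2 - β) := by ring
  have e9 : w - β = (w - (b₁ + b₂) / 2) + ((b₁ + b₂) / 2 - β) := by ring
  have e10 : w - (b₁ + b₂ - β) = (w - (b₁ + b₂) / 2) - ((b₁ + b₂) / 2 - β) := by ring
  have e11 : b₂ - α = ((b₁ + b₂) / 2 - b₁) + ((b₁ + b₂) / 2 - α) := by ring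
  have e12 : α - b₁ = ((b₁ + b₂) / 2 - b₁) - ((b₁ + b₂) / 2 - α) := by ring
  rw [e1, e2, e3, e4, e5, e6, e7, e8, e9, e10, e11, e12,
    key hτ (w - (b₁ + b₂) / 2) ((b₁ + b₂) / 2 - b₁),
    key hτ ((b₁ + b₂) / 2 - α) ((b₁ + b₂) / 2 - β),
    key hτ (w - (b₁ + b₂) / 2) ((b₁ + b₂) / 2 - α),
    key hτ ((b₁ + b₂) / 2 - b₁) ((b₁ + b₂) / 2 - β),
    key hτ (w - (b₁ + b₂) / 2) ((b₁ + b₂) / 2 - β),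
    key hτ ((b₁ + b₂) / 2 - b₁) ((b₁ + b₂) / 2 - α)]
  ring

/-- The interpolation sum. -/
def SS {ι : Type*} [DecidableEq ι] (τ : ℂ) (A : Finset ι) (a b : ι → ℂ) : ℂ :=
  ∑ i ∈ A, (∏ j ∈ A, jacobiTheta1 (a i - b j) τ) /
    ∏ j ∈ A.erase i, jacobiTheta1 (a i - a j) τ

/-- The nondegenerate induction step. -/
lemma step {ι : Type*} [DecidableEq ι] {τ : ℂ} (hτ : 0 < τ.im) (n : ℕ)
    (IH : ∀ (A : Finset ι) (a b : ι → ℂ), A.card = n →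
      (∑ i ∈ A, a i) = (∑ i ∈ A, b i) →
      (∀ i ∈ A, ∀ j ∈ A, i ≠ j → jacobiTheta1 (a i - a j) τ ≠ 0) → SS τ A a b = 0)
    (A : Finset ι) (a b : ι → ℂ) (hcard : A.card = n + 1)
    {i₁ i₂ : ι} (h₁ : i₁ ∈ A) (h₂ : i₂ ∈ A) (h12 : i₁ ≠ i₂)
    (hbal : (∑ i ∈ A, a i) = ∑ i ∈ A, b i)
    (hzz : ∀ i ∈ A, ∀ j ∈ A, i ≠ j → jacobiTheta1 (a i - a j) τ ≠ 0)
    (hD : jacobiTheta1 (b i₁ + b i₂ - a i₁ - a i₂) τ ≠ 0) :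
    SS τ A a b = 0 := by
  classical
  have h₂' : i₂ ∈ A.erase i₁ := Finset.mem_erase.mpr ⟨h12.symm, h₂⟩
  have hDne : jacobiTheta1 (a i₂ - a i₁) τ ≠ 0 := hzz i₂ h₂ i₁ h₁ h12.symm
  have hstar : ∀ w : ℂ,
      jacobiTheta1 (w - b i₁) τ * jacobiTheta1 (w - b i₂) τ *
        (jacobiTheta1 (b i₁ + b i₂ - a i₁ - a i₂) τ * jacobiTheta1 (a i₂ - a i₁) τ) =
      jacobiTheta1 (b i₂ - a i₂) τ * jacobiTheta1 (a i₂ - b i₁) τ *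
        (jacobiTheta1 (w - a i₁) τ * jacobiTheta1 (w - (b i₁ + b i₂ - a i₁)) τ) -
      jacobiTheta1 (b i₂ - a i₁) τ * jacobiTheta1 (a i₁ - b i₁) τ *
        (jacobiTheta1 (w - a i₂) τ * jacobiTheta1 (w - (b i₁ + b i₂ - a i₂)) τ) :=
    fun w => star hτ (b i₁) (b i₂) (a i₁) (a i₂) w
  -- identification of the first reduced sum
  have hU₁ : (∑ k ∈ A, (jacobiTheta1 (a k - a i₁) τ *
        jacobiTheta1 (a k - (b i₁ + b i₂ - a i₁)) τ *
        ∏ j ∈ (A.erase i₁).erase i₂, jacobiTheta1 (a k - b j) τ) /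
        ∏ j ∈ A.erase k, jacobiTheta1 (a k - a j) τ)
      = SS τ (A.erase i₁) a (Function.update b i₂ (b i₁ + b i₂ - a i₁)) := by
    rw [SS, ← Finset.add_sum_erase A _ h₁]
    have hz : jacobiTheta1 (a i₁ - a i₁) τ = 0 := by rw [sub_self]; exact jacobiTheta1_zero τ
    rw [hz, zero_mul, zero_mul, zero_div, zero_add]
    apply Finset.sum_congr rfl
    intro k hk
    have hkA : k ∈ A := Finset.mem_of_mem_erase hk
    have hki₁ : k ≠ i₁ := Finset.ne_of_mem_erase hk
    have hnum : (∏ j ∈ A.erase i₁,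
        jacobiTheta1 (a k - Function.update b i₂ (b i₁ + b i₂ - a i₁) j) τ)
        = jacobiTheta1 (a k - (b i₁ + b i₂ - a i₁)) τ *
          ∏ j ∈ (A.erase i₁).erase i₂, jacobiTheta1 (a k - b j) τ := by
      rw [← Finset.mul_prod_erase _ _ h₂', Function.update_self]
      congr 1
      apply Finset.prod_congr rfl
      intro j hj
      rw [Function.update_of_ne (Finset.ne_of_mem_erase hj)]
    have hden : (∏ j ∈ A.erase k, jacobiTheta1 (a k - a j) τ) =
        jacobiTheta1 (a k - a i₁) τ *
          ∏ j ∈ (A.erase i₁).erase k, jacobiTheta1 (a k - a j) τ := by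
      rw [← Finset.mul_prod_erase _ _ (Finset.mem_erase.mpr ⟨hki₁.symm, h₁⟩),
        Finset.erase_right_comm]
    rw [hnum, hden, mul_assoc, mul_div_mul_left _ _ (hzz k hkA i₁ h₁ hki₁)]
  -- identification of the second reduced sum
  have hU₂ : (∑ k ∈ A, (jacobiTheta1 (a k - a i₂) τ *
        jacobiTheta1 (a k - (b i₁ + b i₂ - a i₂)) τ *
        ∏ j ∈ (A.erase i₁).erase i₂, jacobiTheta1 (a k - b j) τ) /
        ∏ j ∈ A.erase k, jacobiTheta1 (a k - a j) τ)
      = SS τ (A.erase i₂) a (Function.update b i₁ (b i₁ + b i₂ - a i₂)) := by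
    rw [SS, ← Finset.add_sum_erase A _ h₂]
    have hz : jacobiTheta1 (a i₂ - a i₂) τ = 0 := by rw [sub_self]; exact jacobiTheta1_zero τ
    rw [hz, zero_mul, zero_mul, zero_div, zero_add]
    apply Finset.sum_congr rfl
    intro k hk
    have hkA : k ∈ A := Finset.mem_of_mem_erase hk
    have hki₂ : k ≠ i₂ := Finset.ne_of_mem_erase hk
    have h₁'' : i₁ ∈ A.erase i₂ := Finset.mem_erase.mpr ⟨h12, h₁⟩
    have hnum : (∏ j ∈ A.erase i₂,
        jacobiTheta1 (a k - Function.update b i₁ (b i₁ + b i₂ - a i₂) j) τ)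
        = jacobiTheta1 (a k - (b i₁ + b i₂ - a i₂)) τ *
          ∏ j ∈ (A.erase i₁).erase i₂, jacobiTheta1 (a k - b j) τ := by
      rw [← Finset.mul_prod_erase _ _ h₁'', Function.update_self]
      rw [Finset.erase_right_comm]
      congr 1
      apply Finset.prod_congr rfl
      intro j hj
      rw [Function.update_of_ne (Finset.ne_of_mem_erase (Finset.mem_of_mem_erase hj))]
    have hden : (∏ j ∈ A.erase k, jacobiTheta1 (a k - a j) τ) =
        jacobiTheta1 (a k - a i₂) τ *
          ∏ j ∈ (A.erase i₂).erase k, jacobiTheta1 (a k - a j) τ := by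
      rw [← Finset.mul_prod_erase _ _ (Finset.mem_erase.mpr ⟨hki₂.symm, h₂⟩),
        Finset.erase_right_comm]
    rw [hnum, hden, mul_assoc, mul_div_mul_left _ _ (hzz k hkA i₂ h₂ hki₂)]
  -- the main algebraic identity
  have hmain : SS τ A a b *
      (jacobiTheta1 (b i₁ + b i₂ - a i₁ - a i₂) τ * jacobiTheta1 (a i₂ - a i₁) τ) =
      jacobiTheta1 (b i₂ - a i₂) τ * jacobiTheta1 (a i₂ - b i₁) τ *
        (∑ k ∈ A, (jacobiTheta1 (a k - a i₁) τ *
          jacobiTheta1 (a k - (b i₁ + b i₂ - a i₁)) τ *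
          ∏ j ∈ (A.erase i₁).erase i₂, jacobiTheta1 (a k - b j) τ) /
          ∏ j ∈ A.erase k, jacobiTheta1 (a k - a j) τ) -
      jacobiTheta1 (b i₂ - a i₁) τ * jacobiTheta1 (a i₁ - b i₁) τ *
        (∑ k ∈ A, (jacobiTheta1 (a k - a i₂) τ *
          jacobiTheta1 (a k - (b i₁ + b i₂ - a i₂)) τ *
          ∏ j ∈ (A.erase i₁).erase i₂, jacobiTheta1 (a k - b j) τ) /
          ∏ j ∈ A.erase k, jacobiTheta1 (a k - a j) τ) := by
    rw [SS, Finset.sum_mul, Finset.mul_sum, Finset.mul_sum, ← Finset.sum_sub_distrib]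
    apply Finset.sum_congr rfl
    intro k hkA
    have e1 : (∏ j ∈ A, jacobiTheta1 (a k - b j) τ) =
        jacobiTheta1 (a k - b i₁) τ * ∏ j ∈ A.erase i₁, jacobiTheta1 (a k - b j) τ :=
      (Finset.mul_prod_erase A (fun j => jacobiTheta1 (a k - b j) τ) h₁).symm
    have e2 : (∏ j ∈ A.erase i₁, jacobiTheta1 (a k - b j) τ) =
        jacobiTheta1 (a k - b i₂) τ *
          ∏ j ∈ (A.erase i₁).erase i₂, jacobiTheta1 (a k - b j) τ :=
      (Finset.mul_prod_erase (A.erase i₁) (fun j => jacobiTheta1 (a k - b j) τ) h₂').symm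
    have hNk : (∏ j ∈ A, jacobiTheta1 (a k - b j) τ) =
        jacobiTheta1 (a k - b i₁) τ * (jacobiTheta1 (a k - b i₂) τ *
          ∏ j ∈ (A.erase i₁).erase i₂, jacobiTheta1 (a k - b j) τ) := by
      rw [e1, e2]
    have hdk : (∏ j ∈ A.erase k, jacobiTheta1 (a k - a j) τ) ≠ 0 :=
      Finset.prod_ne_zero_iff.mpr fun j hj =>
        hzz k hkA j (Finset.mem_of_mem_erase hj) (Finset.ne_of_mem_erase hj).symm
    rw [hNk]
    field_simp
    linear_combination (∏ j ∈ (A.erase i₁).erase i₂, jacobiTheta1 (a k - b j) τ) * hstar (a k)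
  rw [hU₁, hU₂] at hmain
  -- apply the induction hypothesis to both reduced sums
  have hcard₁ : (A.erase i₁).card = n := by
    rw [Finset.card_erase_of_mem h₁, hcard]
    omega
  have hcard₂ : (A.erase i₂).card = n := by
    rw [Finset.card_erase_of_mem h₂, hcard]
    omega
  
  have hsum_b : ∑ i ∈ A, b i = b i₁ + (b i₂ + ∑ i ∈ (A.erase i₁).erase i₂, b i) := by
    rw [Finset.add_sum_erase _ _ h₂', Finset.add_sum_erase _ _ h₁]
  have hsum_a₁ : ∑ i ∈ A, a i = a i₁ + ∑ i ∈ A.erase i₁, a i :=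
    (Finset.add_sum_erase _ _ h₁).symm
  have hsum_a₂ : ∑ i ∈ A, a i = a i₂ + ∑ i ∈ A.erase i₂, a i :=
    (Finset.add_sum_erase _ _ h₂).symm
  have hbal₁ : (∑ i ∈ A.erase i₁, a i) =
      ∑ i ∈ A.erase i₁, Function.update b i₂ (b i₁ + b i₂ - a i₁) i := by
    rw [Finset.sum_update_of_mem h₂', Finset.sdiff_singleton_eq_erase]
    linear_combination hbal + hsum_b - hsum_a₁
  have hbal₂ : (∑ i ∈ A.erase i₂, a i) =
      ∑ i ∈ A.erase i₂, Function.update b i₁ (b i₁ + b i₂ - a i₂) i := by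
    rw [Finset.sum_update_of_mem (Finset.mem_erase.mpr ⟨h12, h₁⟩),
      Finset.sdiff_singleton_eq_erase, Finset.erase_right_comm]
    linear_combination hbal + hsum_b - hsum_a₂
  have hzz₁ : ∀ i ∈ A.erase i₁, ∀ j ∈ A.erase i₁, i ≠ j →
      jacobiTheta1 (a i - a j) τ ≠ 0 := fun i hi j hj hij =>
    hzz i (Finset.mem_of_mem_erase hi) j (Finset.mem_of_mem_erase hj) hij
  have hzz₂ : ∀ i ∈ A.erase i₂, ∀ j ∈ A.erase i₂, i ≠ j →
      jacobiTheta1 (a i - a j) τ ≠ 0 := fun i hi j hj hij =>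
    hzz i (Finset.mem_of_mem_erase hi) j (Finset.mem_of_mem_erase hj) hij
  rw [IH _ _ _ hcard₁ hbal₁ hzz₁, IH _ _ _ hcard₂ hbal₂ hzz₂, mul_zero, mul_zero,
    sub_zero] at hmain
  rcases mul_eq_zero.mp hmain with h | h
  · exact h
  · exact absurd h (mul_ne_zero hD hDne)

open Topology in
lemma gen {ι : Type*} [DecidableEq ι] {τ : ℂ} (hτ : 0 < τ.im) :
    ∀ (n : ℕ) (A : Finset ι) (a b : ι → ℂ), A.card = n →
      (∑ i ∈ A, a i) = (∑ i ∈ A, b i) →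
      (∀ i ∈ A, ∀ j ∈ A, i ≠ j → jacobiTheta1 (a i - a j) τ ≠ 0) →
      SS τ A a b = 0 := by
  intro n
  induction n with
  | zero =>
    intro A a b hc _ _
    simp [SS, Finset.card_eq_zero.mp hc]
  | succ m IH =>
    intro A a b hc hbal hzz
    match m, IH with
    | 0, _ =>
      obtain ⟨i, rfl⟩ := Finset.card_eq_one.mp hc
      rw [Finset.sum_singleton, Finset.sum_singleton] at hbal
      rw [SS, Finset.sum_singleton, Finset.prod_singleton, Finset.erase_singleton,
        Finset.prod_empty, hbal, sub_self, jacobiTheta1_zero]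
      simp
    | 1, _ =>
      obtain ⟨i, j, hij, rfl⟩ := Finset.card_eq_two.mp hc
      have hii : i ∉ ({j} : Finset ι) := by simp [hij]
      have hne : jacobiTheta1 (a i - a j) τ ≠ 0 :=
        hzz i (by simp) j (by simp) hij
      rw [Finset.sum_insert hii, Finset.sum_singleton, Finset.sum_insert hii,
        Finset.sum_singleton] at hbal
      rw [SS, Finset.sum_insert hii, Finset.sum_singleton, Finset.prod_insert hii,
        Finset.prod_singleton, Finset.prod_insert hii, Finset.prod_singleton,
        Finset.erase_insert hii, Finset.erase_insert_of_ne hij,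
        Finset.erase_singleton, Finset.prod_singleton, Finset.prod_insert
          (Finset.notMem_empty i), Finset.prod_empty, mul_one]
      have e1 : a j - b i = -(a i - b j) := by linear_combination hbal
      have e2 : a j - b j = -(a i - b i) := by linear_combination hbal
      have e3 : a j - a i = -(a i - a j) := by ring
      rw [e1, e2, e3, jacobiTheta1_neg, jacobiTheta1_neg, jacobiTheta1_neg]
      rw [div_neg, ← sub_eq_add_neg, ← sub_div]
      have hz2 : jacobiTheta1 (a i - b i) τ * jacobiTheta1 (a i - b j) τ -
          -jacobiTheta1 (a i - b j) τ * -jacobiTheta1 (a i - b i) τ = 0 := by ring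
      rw [hz2, zero_div]
    | (m'' + 2), IH =>
      have hpos : 0 < A.card := by omega
      obtain ⟨i₁, h₁⟩ := Finset.card_pos.mp hpos
      have hpos2 : 0 < (A.erase i₁).card := by
        rw [Finset.card_erase_of_mem h₁, hc]; omega
      obtain ⟨i₂, h₂'⟩ := Finset.card_pos.mp hpos2
      have hpos3 : 0 < ((A.erase i₁).erase i₂).card := by
        rw [Finset.card_erase_of_mem h₂', Finset.card_erase_of_mem h₁, hc]; omega
      obtain ⟨i₀, h₀''⟩ := Finset.card_pos.mp hpos3
      have h₂ : i₂ ∈ A := Finset.mem_of_mem_erase h₂'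
      have h12 : i₁ ≠ i₂ := (Finset.ne_of_mem_erase h₂').symm
      have h₀' : i₀ ∈ A.erase i₁ := Finset.mem_of_mem_erase h₀''
      have h₀ : i₀ ∈ A := Finset.mem_of_mem_erase h₀'
      have h02 : i₀ ≠ i₂ := Finset.ne_of_mem_erase h₀''
      have h01 : i₀ ≠ i₁ := Finset.ne_of_mem_erase h₀'
      classical
      set bf : ℂ → ι → ℂ := fun ε =>
        Function.update (Function.update b i₂ (b i₂ + ε)) i₀ (b i₀ - ε) with hbf
      have hbf₁ : ∀ ε, bf ε i₁ = b i₁ := by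
        intro ε
        simp only [hbf]
        rw [Function.update_of_ne h01.symm, Function.update_of_ne h12]
      have hbf₂ : ∀ ε, bf ε i₂ = b i₂ + ε := by
        intro ε
        simp only [hbf]
        rw [Function.update_of_ne h02.symm, Function.update_self]
      have hbf0 : bf 0 = b := by
        funext j
        simp only [hbf]
        by_cases hj0 : j = i₀
        · subst hj0; rw [Function.update_self]; ring
        · rw [Function.update_of_ne hj0]
          by_cases hj2 : j = i₂
          · subst hj2; rw [Function.update_self]; ring
          · rw [Function.update_of_ne hj2]
      have hbal' : ∀ ε : ℂ, (∑ i ∈ A, a i) = ∑ i ∈ A, bf ε i := by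
        intro ε
        have hs1 : ∑ i ∈ A, bf ε i =
            (b i₀ - ε) + ∑ i ∈ A.erase i₀, Function.update b i₂ (b i₂ + ε) i := by
          simp only [hbf]
          rw [Finset.sum_update_of_mem h₀, Finset.sdiff_singleton_eq_erase]
        have hs2 : ∑ i ∈ A.erase i₀, Function.update b i₂ (b i₂ + ε) i =
            (b i₂ + ε) + ∑ i ∈ (A.erase i₀).erase i₂, b i := by
          rw [Finset.sum_update_of_mem (Finset.mem_erase.mpr ⟨h02.symm, h₂⟩),
            Finset.sdiff_singleton_eq_erase]
        have hs3 : ∑ i ∈ A, b i = b i₀ + (b i₂ + ∑ i ∈ (A.erase i₀).erase i₂, b i) := by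
          rw [Finset.add_sum_erase _ _ (Finset.mem_erase.mpr ⟨h02.symm, h₂⟩),
            Finset.add_sum_erase _ _ h₀]
        linear_combination hbal + hs3 - hs1 - hs2
      have hψ : ∀ ε : ℂ, jacobiTheta1 (b i₁ + b i₂ + ε - a i₁ - a i₂) τ ≠ 0 →
          SS τ A a (bf ε) = 0 := by
        intro ε hφ
        apply step hτ (m'' + 2) IH A a (bf ε) hc h₁ h₂ h12 (hbal' ε) hzz
        have harg : bf ε i₁ + bf ε i₂ - a i₁ - a i₂ =
            b i₁ + b i₂ + ε - a i₁ - a i₂ := by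
          rw [hbf₁, hbf₂]; ring
        rw [harg]
        exact hφ
      have hφana : AnalyticOnNhd ℂ
          (fun ε : ℂ => jacobiTheta1 (b i₁ + b i₂ + ε - a i₁ - a i₂) τ) Set.univ := by
        have hdiff : Differentiable ℂ
            (fun ε : ℂ => jacobiTheta1 (b i₁ + b i₂ + ε - a i₁ - a i₂) τ) := by
          apply (differentiable_jacobiTheta1 hτ).comp
          fun_prop
        exact hdiff.differentiableOn.analyticOnNhd isOpen_univ
      have hε₀ : jacobiTheta1
          (b i₁ + b i₂ + (a i₁ + a i₂ - b i₁ - b i₂ + (a i₁ - a i₂)) - a i₁ - a i₂) τ ≠ 0 := by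
        have harg : b i₁ + b i₂ + (a i₁ + a i₂ - b i₁ - b i₂ + (a i₁ - a i₂)) - a i₁ - a i₂ =
            a i₁ - a i₂ := by ring
        rw [harg]
        exact hzz i₁ h₁ i₂ h₂ h12
      have hfreq : ∀ᶠ ε in 𝓝[≠] (0:ℂ),
          jacobiTheta1 (b i₁ + b i₂ + ε - a i₁ - a i₂) τ ≠ 0 := by
        rcases (hφana 0 (Set.mem_univ 0)).eventually_eq_zero_or_eventually_ne_zero with h | h
        · exfalso
          have heq := hφana.eqOn_of_preconnected_of_eventuallyEq analyticOnNhd_const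
            isPreconnected_univ (Set.mem_univ (0:ℂ)) h
          exact hε₀ (heq (Set.mem_univ _))
        · exact h
      have hcont : Continuous fun ε : ℂ => SS τ A a (bf ε) := by
        simp only [SS]
        apply continuous_finset_sum
        intro k _
        apply Continuous.div_const
        apply continuous_finset_prod
        intro j _
        have hb : Continuous fun ε : ℂ => a k - bf ε j := by
          simp only [hbf]
          by_cases hj0 : j = i₀
          · subst hj0
            simp only [Function.update_self]
            fun_prop
          · simp only [Function.update_of_ne hj0]
            by_cases hj2 : j = i₂
            · subst hj2
              simp only [Function.update_self]
              fun_prop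
            · simp only [Function.update_of_ne hj2]
              fun_prop
        exact (continuous_jacobiTheta1 hτ).comp hb
      have h1 : ∀ᶠ ε in 𝓝[≠] (0:ℂ), SS τ A a (bf ε) = 0 := hfreq.mono hψ
      have h2 : Filter.Tendsto (fun ε : ℂ => SS τ A a (bf ε)) (𝓝[≠] (0:ℂ))
          (nhds (SS τ A a (bf 0))) :=
        tendsto_nhdsWithin_of_tendsto_nhds (hcont.tendsto 0)
      have h3 : Filter.Tendsto (fun ε : ℂ => SS τ A a (bf ε)) (𝓝[≠] (0:ℂ)) (nhds 0) :=
        Filter.Tendsto.congr' (h1.mono fun x hx => hx.symm) tendsto_const_nhds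
      have h4 : SS τ A a (bf 0) = 0 := tendsto_nhds_unique h2 h3
      rwa [hbf0] at h4

end ThetaAux

/-- Theta functional interpolation identity. -/
theorem theta_interpolation
    (M : ℕ) (hM : 1 ≤ M) (τ : ℂ) (hτ : 0 < τ.im)
    (z z' : Fin M → ℂ)
    (hbal : (∑ i, z i) = ∑ i, z' i)
    (hzz : ∀ i j, i ≠ j → jacobiTheta1 (z i - z j) τ ≠ 0) :
    ∑ i : Fin M,
        (∏ j : Fin M, jacobiTheta1 (z i - z' j) τ) /
          ∏ j ∈ univ.erase i, jacobiTheta1 (z i - z j) τ = 0 := by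
  have h := ThetaAux.gen (ι := Fin M) hτ M Finset.univ z z' (by simp) hbal
    (fun i _ j _ hij => hzz i j hij)
  simpa [ThetaAux.SS] using h
end
end

section
/- For every θ ∈ ℝ: sinh²(γ_θ) = cosh⁴(K*_x)·sinh²(2K_y)·(1−αe^{iθ})(1−αe^{−iθ})(1−βe^{iθ})(1−βe^{−iθ}); equivalently, sinh²(γ_θ) = cosh⁴(K*_x)·sinh²(2K_y)·(1−2α cos θ+α²)(1−2β cos θ+β²). -/
open Finset

noncomputable section

lemma core_id (sx cx sy cy c : ℝ) (hcx : cx ^ 2 = 1 + sx ^ 2) (hcy : cy ^ 2 = 1 + sy ^ 2) :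
    ((cx ^ 2 + sx ^ 2) * (cy ^ 2 + sy ^ 2) - 4 * sx * cx * sy * cy * c) ^ 2 - 1 =
      4 * (cx ^ 2 * sy ^ 2 - 2 * sx * cx * sy * cy * c + sx ^ 2 * cy ^ 2) *
        (cx ^ 2 * cy ^ 2 - 2 * sx * cx * sy * cy * c + sx ^ 2 * sy ^ 2) := by
  linear_combination ((cy ^ 2 - sy ^ 2) ^ 2 * (1 + cx ^ 2 - sx ^ 2)) * hcx +
    (1 + cy ^ 2 - sy ^ 2) * hcy

/-- sinh²γ_θ = cosh⁴(K*_x)·sinh²(2K_y)·(1−αe^{iθ})(1−αe^{−iθ})(1−βe^{iθ})(1−βe^{−iθ})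
= cosh⁴(K*_x)·sinh²(2K_y)·(1−2α cos θ+α²)(1−2β cos θ+β²). -/
theorem sinh_sq_gamma
    (Kx Ky Kxs : ℝ)
    (hKx : 0 < Kx) (hKy : 0 < Ky)
    (hKxs_pos : 0 < Kxs) (hKxs : Real.tanh Kxs = Real.exp (-(2 * Kx)))
    (α β : ℝ)
    (hα : α = Real.tanh Kxs * (Real.cosh Ky / Real.sinh Ky))
    (hβ : β = Real.tanh Kxs * Real.tanh Ky)
    (hferro : Kxs < Ky)
    (γ : ℝ → ℝ) (hγ_nonneg : ∀ θ, 0 ≤ γ θ)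
    (hγ : ∀ θ, Real.cosh (γ θ) =
      Real.cosh (2 * Kxs) * Real.cosh (2 * Ky) -
        Real.sinh (2 * Kxs) * Real.sinh (2 * Ky) * Real.cos θ) :
    ∀ θ : ℝ,
      ((Real.sinh (γ θ) ^ 2 : ℝ) : ℂ) =
          ((Real.cosh Kxs ^ 4 * Real.sinh (2 * Ky) ^ 2 : ℝ) : ℂ) *
            ((1 - (α : ℂ) * Complex.exp (Complex.I * θ)) *
              (1 - (α : ℂ) * Complex.exp (-Complex.I * θ)) *
              ((1 - (β : ℂ) * Complex.exp (Complex.I * θ)) *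
                (1 - (β : ℂ) * Complex.exp (-Complex.I * θ)))) ∧
        Real.sinh (γ θ) ^ 2 =
          Real.cosh Kxs ^ 4 * Real.sinh (2 * Ky) ^ 2 *
            ((1 - 2 * α * Real.cos θ + α ^ 2) * (1 - 2 * β * Real.cos θ + β ^ 2)) := by
  intro θ
  set sx := Real.sinh Kxs
  set cx := Real.cosh Kxs
  set sy := Real.sinh Ky
  set cy := Real.cosh Ky
  have hcx : cx ^ 2 = 1 + sx ^ 2 := by rw [Real.cosh_sq]; ring
  have hcy : cy ^ 2 = 1 + sy ^ 2 := by rw [Real.cosh_sq]; ring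
  have hcx0 : cx ≠ 0 := (Real.cosh_pos Kxs).ne'
  have hcy0 : cy ≠ 0 := (Real.cosh_pos Ky).ne'
  have hsy0 : sy ≠ 0 := by
    have : Real.sinh 0 < Real.sinh Ky := Real.sinh_lt_sinh.2 hKy
    simp only [Real.sinh_zero] at this
    exact ne_of_gt this
  have hαval : α = (sx / cx) * (cy / sy) := by
    rw [hα, Real.tanh_eq_sinh_div_cosh]
  have hβval : β = (sx / cx) * (sy / cy) := by
    rw [hβ, Real.tanh_eq_sinh_div_cosh, Real.tanh_eq_sinh_div_cosh]
  have hc2x : Real.cosh (2 * Kxs) = cx ^ 2 + sx ^ 2 := by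
    rw [two_mul, Real.cosh_add]; ring
  have hs2x : Real.sinh (2 * Kxs) = 2 * sx * cx := by
    rw [two_mul, Real.sinh_add]; ring
  have hc2y : Real.cosh (2 * Ky) = cy ^ 2 + sy ^ 2 := by
    rw [two_mul, Real.cosh_add]; ring
  have hs2y : Real.sinh (2 * Ky) = 2 * sy * cy := by
    rw [two_mul, Real.sinh_add]; ring
  -- the real identity
  have hreal : Real.sinh (γ θ) ^ 2 =
      cx ^ 4 * Real.sinh (2 * Ky) ^ 2 *
        ((1 - 2 * α * Real.cos θ + α ^ 2) * (1 - 2 * β * Real.cos θ + β ^ 2)) := by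
    have h1 : Real.sinh (γ θ) ^ 2 = Real.cosh (γ θ) ^ 2 - 1 := Real.sinh_sq (γ θ)
    rw [h1, hγ θ, hc2x, hs2x, hc2y, hs2y, hαval, hβval]
    have key := core_id sx cx sy cy (Real.cos θ) hcx hcy
    have hrhs : cx ^ 4 * (2 * sy * cy) ^ 2 *
        ((1 - 2 * ((sx / cx) * (cy / sy)) * Real.cos θ + ((sx / cx) * (cy / sy)) ^ 2) *
          (1 - 2 * ((sx / cx) * (sy / cy)) * Real.cos θ + ((sx / cx) * (sy / cy)) ^ 2)) =
        4 * (cx ^ 2 * sy ^ 2 - 2 * sx * cx * sy * cy * Real.cos θ + sx ^ 2 * cy ^ 2) *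
          (cx ^ 2 * cy ^ 2 - 2 * sx * cx * sy * cy * Real.cos θ + sx ^ 2 * sy ^ 2) := by
      field_simp
      ring
    linear_combination key - hrhs
  refine ⟨?_, hreal⟩
  -- complex part: reduce product of complex factors to real expression
  have he : Complex.exp (Complex.I * θ) * Complex.exp (-Complex.I * θ) = 1 := by
    rw [← Complex.exp_add]; ring_nf; exact Complex.exp_zero
  have hsum : Complex.exp (Complex.I * θ) + Complex.exp (-Complex.I * θ) =
      2 * Complex.cos θ := by
    rw [Complex.cos]
    ring_nf
  have hprod : ∀ t : ℝ,
      (1 - (t : ℂ) * Complex.exp (Complex.I * θ)) *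
        (1 - (t : ℂ) * Complex.exp (-Complex.I * θ)) =
      ((1 - 2 * t * Real.cos θ + t ^ 2 : ℝ) : ℂ) := by
    intro t
    push_cast
    linear_combination (t : ℂ) ^ 2 * he - (t : ℂ) * hsum
  rw [hprod α, hprod β, hreal]
  push_cast
  ring
end
end
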